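/- (Rafael-type Theorem for naturally semifull semifunctors) Let F ⊣ₛ G : D → C be a semiadjunction of semifunctors with unit η and counit ε. Then: (1) F is naturally semifull if and only if there exists a seminatural transformation ν : GF → Id_C with η_X ∘ ν_X = GF(Id_X) for all objects X of C; (2) G is naturally semifull if and only if there exists a seminatural transformation γ : Id_D → FG with γ_D ∘ ε_D = FG(Id_D) for all objects D of D. -/

import Mathlib

open CategoryTheory

universe v₁ v₂ v₃ v₄ u₁ u₂ u₃ u₄

/-- A semifunctor between categories: it preserves composition of morphisms
but not necessarily identities. -/
structure Semifunctor (C : Type u₁) (D : Type u₂) [Category.{v₁} C] [Category.{v₂} D] where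
  obj : C → D
  map : ∀ {X Y : C}, (X ⟶ Y) → (obj X ⟶ obj Y)
  map_comp : ∀ {X Y Z : C} (f : X ⟶ Y) (g : Y ⟶ Z), map (f ≫ g) = map f ≫ map g

namespace Semifunctor

variable {C : Type u₁} {D : Type u₂} {E : Type u₃} {C' : Type u₄}
variable [Category.{v₁} C] [Category.{v₂} D] [Category.{v₃} E] [Category.{v₄} C']

/-- Composition of semifunctors, in diagrammatic order: `F.comp G = G ∘ F`. -/
def comp (F : Semifunctor C D) (G : Semifunctor D E) : Semifunctor C E where
  obj X := G.obj (F.obj X)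
  map f := G.map (F.map f)
  map_comp f g := by
    show G.map (F.map (f ≫ g)) = G.map (F.map f) ≫ G.map (F.map g)
    rw [F.map_comp, G.map_comp]

/-- `α` is a natural transformation between the semifunctors `F` and `F'`:
`α_Y ∘ F(f) = F'(f) ∘ α_X` for every `f : X ⟶ Y`. -/
def IsNatural {F F' : Semifunctor C D} (α : ∀ X : C, F.obj X ⟶ F'.obj X) : Prop :=
  ∀ ⦃X Y : C⦄ (f : X ⟶ Y), F.map f ≫ α Y = α X ≫ F'.map f

/-- `α` is a seminatural transformation: natural and `α_X ∘ F(Id_X) = α_X`. -/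
def IsSeminatural {F F' : Semifunctor C D} (α : ∀ X : C, F.obj X ⟶ F'.obj X) : Prop :=
  IsNatural α ∧ ∀ X : C, F.map (𝟙 X) ≫ α X = α X

/-- A semifunctor is faithful if all its hom-maps are injective. -/
def Faithful (F : Semifunctor C D) : Prop :=
  ∀ ⦃X Y : C⦄ (f g : X ⟶ Y), F.map f = F.map g → f = g

/-- A semifunctor is full if all its hom-maps are surjective. -/
def Full (F : Semifunctor C D) : Prop :=
  ∀ ⦃X Y : C⦄ (g : F.obj X ⟶ F.obj Y), ∃ f : X ⟶ Y, F.map f = g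

/-- A semifunctor is semifull if for every `f : FX ⟶ FY` there is `g : X ⟶ Y`
with `F(g) = F(Id_Y) ∘ f ∘ F(Id_X)`. -/
def Semifull (F : Semifunctor C D) : Prop :=
  ∀ ⦃X Y : C⦄ (f : F.obj X ⟶ F.obj Y), ∃ g : X ⟶ Y,
    F.map g = F.map (𝟙 X) ≫ f ≫ F.map (𝟙 Y)

/-- A semifunctor is semifully faithful if it is faithful and semifull. -/
def SemifullyFaithful (F : Semifunctor C D) : Prop :=
  F.Faithful ∧ F.Semifull

/-- `P` is a natural transformation `Hom_D(F-,F-) → Hom_C(-,-)`. -/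
def IsHomNatural (F : Semifunctor C D)
    (P : ∀ X Y : C, (F.obj X ⟶ F.obj Y) → (X ⟶ Y)) : Prop :=
  ∀ (X Y Z T : C) (h : X ⟶ Y) (k : F.obj Y ⟶ F.obj Z) (l : Z ⟶ T),
    P X T (F.map h ≫ k ≫ F.map l) = h ≫ P Y Z k ≫ l

/-- A semifunctor is separable if the associated natural transformation `ℱ` has a
natural retraction `P` : `P(F(f)) = f`. -/
def Separable (F : Semifunctor C D) : Prop :=
  ∃ P : ∀ X Y : C, (F.obj X ⟶ F.obj Y) → (X ⟶ Y),
    F.IsHomNatural P ∧ ∀ (X Y : C) (f : X ⟶ Y), P X Y (F.map f) = f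

/-- A semifunctor is naturally semifull if there is a natural `P` with
`F(P(f)) = F(Id_Y) ∘ f ∘ F(Id_X)` for all `f : FX ⟶ FY`. -/
def NaturallySemifull (F : Semifunctor C D) : Prop :=
  ∃ P : ∀ X Y : C, (F.obj X ⟶ F.obj Y) → (X ⟶ Y),
    F.IsHomNatural P ∧
    ∀ (X Y : C) (f : F.obj X ⟶ F.obj Y),
      F.map (P X Y f) = F.map (𝟙 X) ≫ f ≫ F.map (𝟙 Y)

/-- A semifunctor is semiseparable if there is a natural `P` with
`F(P(F(f))) = F(f)` for all `f : X ⟶ Y`. -/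
def Semiseparable (F : Semifunctor C D) : Prop :=
  ∃ P : ∀ X Y : C, (F.obj X ⟶ F.obj Y) → (X ⟶ Y),
    F.IsHomNatural P ∧
    ∀ (X Y : C) (f : X ⟶ Y), F.map (P X Y (F.map f)) = F.map f

/-- `f : FC ⟶ F'C'` is an `(F_C, F'_{C'})`-semisplit-mono. -/
def IsSemisplitMonoAt (F : Semifunctor C D) (F' : Semifunctor C' D) (c : C) (c' : C')
    (f : F.obj c ⟶ F'.obj c') : Prop :=
  F.map (𝟙 c) ≫ f = f ∧ ∃ g : F'.obj c' ⟶ F.obj c,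
    f ≫ g = F.map (𝟙 c) ∧ F'.map (𝟙 c') ≫ g = g

/-- `f : FC ⟶ F'C'` is an `(F_C, F'_{C'})`-semisplit-epi. -/
def IsSemisplitEpiAt (F : Semifunctor C D) (F' : Semifunctor C' D) (c : C) (c' : C')
    (f : F.obj c ⟶ F'.obj c') : Prop :=
  f ≫ F'.map (𝟙 c') = f ∧ ∃ g : F'.obj c' ⟶ F.obj c,
    g ≫ f = F'.map (𝟙 c') ∧ g ≫ F.map (𝟙 c) = g

/-- `f : FC ⟶ F'C'` is an `(F_C, F'_{C'})`-semi-isomorphism. -/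
def IsSemiIsoAt (F : Semifunctor C D) (F' : Semifunctor C' D) (c : C) (c' : C')
    (f : F.obj c ⟶ F'.obj c') : Prop :=
  F.map (𝟙 c) ≫ f = f ∧ ∃ g : F'.obj c' ⟶ F.obj c,
    f ≫ g = F.map (𝟙 c) ∧ g ≫ f = F'.map (𝟙 c')

end Semifunctor

open Semifunctor

/-- A semiadjunction `F ⊣ₛ G`: seminatural unit and counit satisfying the
semitriangular identities `G(ε) ∘ ηG = G(Id)` and `εF ∘ F(η) = F(Id)`. -/
structure Semiadjunction {C : Type u₁} {D : Type u₂} [Category.{v₁} C] [Category.{v₂} D]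
    (F : Semifunctor C D) (G : Semifunctor D C) where
  unit : ∀ X : C, X ⟶ G.obj (F.obj X)
  counit : ∀ Y : D, F.obj (G.obj Y) ⟶ Y
  unit_natural : ∀ ⦃X Y : C⦄ (f : X ⟶ Y), f ≫ unit Y = unit X ≫ G.map (F.map f)
  counit_natural : ∀ ⦃X Y : D⦄ (g : X ⟶ Y), F.map (G.map g) ≫ counit Y = counit X ≫ g
  right_triangle : ∀ Y : D, unit (G.obj Y) ≫ G.map (counit Y) = G.map (𝟙 Y)
  left_triangle : ∀ X : C, F.map (unit X) ≫ counit (F.obj X) = F.map (𝟙 X)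

/-- The canonical semifunctor `E^e` attached to an idempotent seminatural
transformation `e : Id_C → Id_C`: identity on objects, `f ↦ f ∘ e_X = e_Y ∘ f`. -/
def canonicalSemifunctor {C : Type u₁} [Category.{v₁} C] (e : ∀ X : C, X ⟶ X)
    (hnat : ∀ ⦃X Y : C⦄ (f : X ⟶ Y), f ≫ e Y = e X ≫ f)
    (hid : ∀ X : C, e X ≫ e X = e X) : Semifunctor C C where
  obj X := X
  map {X Y} f := e X ≫ f
  map_comp {X Y Z} f g := by
    show e X ≫ f ≫ g = (e X ≫ f) ≫ e Y ≫ g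
    calc e X ≫ f ≫ g = (e X ≫ e X) ≫ f ≫ g := by rw [hid]
      _ = e X ≫ (e X ≫ f) ≫ g := by simp only [Category.assoc]
      _ = e X ≫ (f ≫ e Y) ≫ g := by rw [← hnat f]
      _ = (e X ≫ f) ≫ e Y ≫ g := by simp only [Category.assoc]

/-!
Given `P`, take `ν_X := P(ε_{FX})` and `γ_Y := P(η_{GY})`; conversely take
`P(f) := η_X ≫ G(f) ≫ ν_Y` and `P(k) := γ_X ≫ F(k) ≫ ε_Y`. Naturality of `P` lets it absorb
`F(𝟙)` on either side, and the semitriangle identities do the rest; in the converse direction the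
key is that `ν ≫ η = GF(𝟙)` forces `F(ν_X) = ε_{FX} ≫ F(𝟙_X)` (dually `G(γ_Y) = G(𝟙_Y) ≫ η_{GY}`).
-/

namespace Semifunctor

variable {C : Type u₁} {D : Type u₂} [Category.{v₁} C] [Category.{v₂} D]
variable (F : Semifunctor C D)

@[simp]
lemma map_id_comp {X Y : C} (f : X ⟶ Y) : F.map (𝟙 X) ≫ F.map f = F.map f := by
  rw [← F.map_comp, Category.id_comp]

@[simp]
lemma map_comp_id {X Y : C} (f : X ⟶ Y) : F.map f ≫ F.map (𝟙 Y) = F.map f := by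
  rw [← F.map_comp, Category.comp_id]

@[simp]
lemma map_id_comp_assoc {X Y : C} (f : X ⟶ Y) {Z : D} (g : F.obj Y ⟶ Z) :
    F.map (𝟙 X) ≫ F.map f ≫ g = F.map f ≫ g := by
  rw [← Category.assoc, map_id_comp]

namespace IsHomNatural

variable {F} {P : ∀ X Y : C, (F.obj X ⟶ F.obj Y) → (X ⟶ Y)} (hP : F.IsHomNatural P)
include hP

lemma apply_map_id_comp_comp_map_id {X Y : C} (k : F.obj X ⟶ F.obj Y) :
    P X Y (F.map (𝟙 X) ≫ k ≫ F.map (𝟙 Y)) = P X Y k := by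
  rw [hP, Category.id_comp, Category.comp_id]

lemma comp_apply {X Y Z : C} (h : X ⟶ Y) (k : F.obj Y ⟶ F.obj Z) :
    h ≫ P Y Z k = P X Z (F.map h ≫ k) :=
  calc h ≫ P Y Z k = P X Z (F.map h ≫ k ≫ F.map (𝟙 Z)) := by rw [hP, Category.comp_id]
    _ = P X Z (F.map (𝟙 X) ≫ (F.map h ≫ k) ≫ F.map (𝟙 Z)) := by
      rw [Category.assoc, F.map_id_comp_assoc]
    _ = P X Z (F.map h ≫ k) := hP.apply_map_id_comp_comp_map_id _

lemma apply_comp {X Y Z : C} (k : F.obj X ⟶ F.obj Y) (l : Y ⟶ Z) :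
    P X Y k ≫ l = P X Z (k ≫ F.map l) :=
  calc P X Y k ≫ l = P X Z (F.map (𝟙 X) ≫ k ≫ F.map l) := by rw [hP, Category.id_comp]
    _ = P X Z (F.map (𝟙 X) ≫ (k ≫ F.map l) ≫ F.map (𝟙 Z)) := by
      rw [Category.assoc, F.map_comp_id]
    _ = P X Z (k ≫ F.map l) := hP.apply_map_id_comp_comp_map_id _

end IsHomNatural

end Semifunctor

namespace Semiadjunction

variable {C : Type u₁} {D : Type u₂} [Category.{v₁} C] [Category.{v₂} D]
variable {F : Semifunctor C D} {G : Semifunctor D C} (adj : Semiadjunction F G)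

lemma unit_comp_map_map_id (X : C) : adj.unit X ≫ G.map (F.map (𝟙 X)) = adj.unit X := by
  rw [← adj.unit_natural, Category.id_comp]

lemma map_map_id_comp_counit (Y : D) : F.map (G.map (𝟙 Y)) ≫ adj.counit Y = adj.counit Y := by
  rw [adj.counit_natural, Category.comp_id]

section LeftAdjoint

variable {P : ∀ X Y : C, (F.obj X ⟶ F.obj Y) → (X ⟶ Y)}

lemma apply_counit_natural (hP : F.IsHomNatural P) {X Y : C} (f : X ⟶ Y) :
    G.map (F.map f) ≫ P _ Y (adj.counit (F.obj Y)) = P _ X (adj.counit (F.obj X)) ≫ f := by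
  rw [hP.comp_apply, hP.apply_comp, adj.counit_natural]

lemma apply_counit_comp_unit
    (hPF : ∀ (X Y : C) (f : F.obj X ⟶ F.obj Y), F.map (P X Y f) = F.map (𝟙 X) ≫ f ≫ F.map (𝟙 Y))
    (X : C) : P _ X (adj.counit (F.obj X)) ≫ adj.unit X = G.map (F.map (𝟙 X)) := by
  rw [adj.unit_natural, hPF, G.map_comp, G.map_comp, ← Category.assoc, unit_comp_map_map_id,
    ← Category.assoc, adj.right_triangle, G.map_id_comp]

variable {ν : ∀ X : C, G.obj (F.obj X) ⟶ X}

lemma map_eq_counit_comp_map_id {X : C} (hν : ν X ≫ adj.unit X = G.map (F.map (𝟙 X))) :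
    F.map (ν X) = adj.counit (F.obj X) ≫ F.map (𝟙 X) :=
  calc F.map (ν X) = F.map (ν X) ≫ F.map (adj.unit X) ≫ adj.counit (F.obj X) := by
        rw [adj.left_triangle, F.map_comp_id]
    _ = F.map (G.map (F.map (𝟙 X))) ≫ adj.counit (F.obj X) := by
        rw [← Category.assoc, ← F.map_comp, hν]
    _ = adj.counit (F.obj X) ≫ F.map (𝟙 X) := adj.counit_natural _

lemma isHomNatural_unit_comp_map_comp
    (hν : ∀ ⦃X Y : C⦄ (f : X ⟶ Y), G.map (F.map f) ≫ ν Y = ν X ≫ f) :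
    F.IsHomNatural fun X Y f => adj.unit X ≫ G.map f ≫ ν Y := by
  intro X Y Z T h k l
  simp only [G.map_comp, Category.assoc, hν l]
  rw [← Category.assoc (adj.unit X), ← adj.unit_natural, Category.assoc]

lemma map_unit_comp_map_comp (hν : ∀ X : C, ν X ≫ adj.unit X = G.map (F.map (𝟙 X)))
    {X Y : C} (f : F.obj X ⟶ F.obj Y) :
    F.map (adj.unit X ≫ G.map f ≫ ν Y) = F.map (𝟙 X) ≫ f ≫ F.map (𝟙 Y) := by
  rw [F.map_comp, F.map_comp, adj.map_eq_counit_comp_map_id (hν Y),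
    ← Category.assoc (F.map (G.map f)), adj.counit_natural, Category.assoc,
    ← Category.assoc (F.map (adj.unit X)), adj.left_triangle]

theorem naturallySemifull_left_iff :
    F.NaturallySemifull ↔ ∃ ν : ∀ X : C, G.obj (F.obj X) ⟶ X,
      (∀ ⦃X Y : C⦄ (f : X ⟶ Y), G.map (F.map f) ≫ ν Y = ν X ≫ f) ∧
      (∀ X : C, G.map (F.map (𝟙 X)) ≫ ν X = ν X) ∧
      (∀ X : C, ν X ≫ adj.unit X = G.map (F.map (𝟙 X))) := by
  constructor
  · rintro ⟨P, hP, hPF⟩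
    exact ⟨fun X => P _ X (adj.counit (F.obj X)), fun _ _ f => adj.apply_counit_natural hP f,
      fun X => (adj.apply_counit_natural hP (𝟙 X)).trans (Category.comp_id _),
      adj.apply_counit_comp_unit hPF⟩
  · rintro ⟨ν, hν, -, hνη⟩
    exact ⟨_, adj.isHomNatural_unit_comp_map_comp hν, fun _ _ => adj.map_unit_comp_map_comp hνη⟩

end LeftAdjoint

section RightAdjoint

variable {P : ∀ X Y : D, (G.obj X ⟶ G.obj Y) → (X ⟶ Y)}

lemma apply_unit_natural (hP : G.IsHomNatural P) {X Y : D} (g : X ⟶ Y) :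
    g ≫ P Y _ (adj.unit (G.obj Y)) = P X _ (adj.unit (G.obj X)) ≫ F.map (G.map g) := by
  rw [hP.comp_apply, hP.apply_comp, adj.unit_natural]

lemma counit_comp_apply_unit
    (hPG : ∀ (X Y : D) (k : G.obj X ⟶ G.obj Y), G.map (P X Y k) = G.map (𝟙 X) ≫ k ≫ G.map (𝟙 Y))
    (Y : D) : adj.counit Y ≫ P Y _ (adj.unit (G.obj Y)) = F.map (G.map (𝟙 Y)) := by
  rw [← adj.counit_natural, hPG, F.map_comp, F.map_comp, Category.assoc, Category.assoc,
    map_map_id_comp_counit, adj.left_triangle, F.map_comp_id]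

variable {γ : ∀ Y : D, Y ⟶ F.obj (G.obj Y)}

lemma map_eq_map_id_comp_unit {Y : D} (hγ : adj.counit Y ≫ γ Y = F.map (G.map (𝟙 Y))) :
    G.map (γ Y) = G.map (𝟙 Y) ≫ adj.unit (G.obj Y) :=
  calc G.map (γ Y) = (adj.unit (G.obj Y) ≫ G.map (adj.counit Y)) ≫ G.map (γ Y) := by
        rw [adj.right_triangle, G.map_id_comp]
    _ = adj.unit (G.obj Y) ≫ G.map (F.map (G.map (𝟙 Y))) := by
        rw [Category.assoc, ← G.map_comp, hγ]
    _ = G.map (𝟙 Y) ≫ adj.unit (G.obj Y) := (adj.unit_natural _).symm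

lemma isHomNatural_comp_map_comp_counit
    (hγ : ∀ ⦃X Y : D⦄ (g : X ⟶ Y), g ≫ γ Y = γ X ≫ F.map (G.map g)) :
    G.IsHomNatural fun X Y k => γ X ≫ F.map k ≫ adj.counit Y := by
  intro X Y Z T h k l
  simp only [F.map_comp, Category.assoc, adj.counit_natural l]
  rw [← Category.assoc (γ X), ← hγ, Category.assoc]

lemma map_comp_map_comp_counit (hγ : ∀ Y : D, adj.counit Y ≫ γ Y = F.map (G.map (𝟙 Y)))
    {X Y : D} (k : G.obj X ⟶ G.obj Y) :
    G.map (γ X ≫ F.map k ≫ adj.counit Y) = G.map (𝟙 X) ≫ k ≫ G.map (𝟙 Y) := by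
  rw [G.map_comp, G.map_comp, adj.map_eq_map_id_comp_unit (hγ X), Category.assoc,
    ← Category.assoc (adj.unit (G.obj X)), ← adj.unit_natural, Category.assoc, adj.right_triangle]

theorem naturallySemifull_right_iff :
    G.NaturallySemifull ↔ ∃ γ : ∀ Y : D, Y ⟶ F.obj (G.obj Y),
      (∀ ⦃X Y : D⦄ (g : X ⟶ Y), g ≫ γ Y = γ X ≫ F.map (G.map g)) ∧
      (∀ Y : D, 𝟙 Y ≫ γ Y = γ Y) ∧
      (∀ Y : D, adj.counit Y ≫ γ Y = F.map (G.map (𝟙 Y))) := by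
  constructor
  · rintro ⟨P, hP, hPG⟩
    exact ⟨fun Y => P Y _ (adj.unit (G.obj Y)), fun _ _ g => adj.apply_unit_natural hP g,
      fun _ => Category.id_comp _, adj.counit_comp_apply_unit hPG⟩
  · rintro ⟨γ, hγ, -, hεγ⟩
    exact ⟨_, adj.isHomNatural_comp_map_comp_counit hγ,
      fun _ _ => adj.map_comp_map_comp_counit hεγ⟩

end RightAdjoint

end Semiadjunction

/-- Rafael-type Theorem for naturally semifull semifunctors: given a semiadjunction
`F ⊣ₛ G`, `F` is naturally semifull iff the unit is a natural semisplit-epi, and `G`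
is naturally semifull iff the counit is a natural semisplit-mono. -/
theorem rafael_naturallySemifull_semifunctors
    {C : Type u₁} {D : Type u₂} [Category.{v₁} C] [Category.{v₂} D]
    {F : Semifunctor C D} {G : Semifunctor D C} (adj : Semiadjunction F G) :
    (F.NaturallySemifull ↔ ∃ ν : ∀ X : C, G.obj (F.obj X) ⟶ X,
      (∀ ⦃X Y : C⦄ (f : X ⟶ Y), G.map (F.map f) ≫ ν Y = ν X ≫ f) ∧
      (∀ X : C, G.map (F.map (𝟙 X)) ≫ ν X = ν X) ∧
      (∀ X : C, ν X ≫ adj.unit X = G.map (F.map (𝟙 X)))) ∧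
    (G.NaturallySemifull ↔ ∃ γ : ∀ Y : D, Y ⟶ F.obj (G.obj Y),
      (∀ ⦃X Y : D⦄ (g : X ⟶ Y), g ≫ γ Y = γ X ≫ F.map (G.map g)) ∧
      (∀ Y : D, 𝟙 Y ≫ γ Y = γ Y) ∧
      (∀ Y : D, adj.counit Y ≫ γ Y = F.map (G.map (𝟙 Y)))) :=
  ⟨adj.naturallySemifull_left_iff, adj.naturallySemifull_right_iff⟩
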